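/- For any real number a, any real x, and sequences (a_n), (b_n), the following inversion formula holds: b_n = ∑_{k=0}^{n} C(n,k) [ (1-a)(-x)^k + (a/2)((1-x)^k + (-1-x)^k) ] a_{n-k} for all n ≥ 0 if and only if a_n = ∑_{k=0}^{n} C(n,k) E_{k,a}(x) b_{n-k} for all n ≥ 0. -/

import Mathlib

open Finset

noncomputable def E (a : ℝ) : ℕ → ℝ
  | 0 => 1
  | n + 1 =>
      -a * ∑ k ∈ (Finset.Icc 1 ((n + 1) / 2)).attach,
        ((n + 1).choose (2 * k.1) : ℝ) * E a (n + 1 - 2 * k.1)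
  decreasing_by
    have h := Finset.mem_Icc.mp k.2
    omega

noncomputable def EP (a : ℝ) (n : ℕ) (x : ℝ) : ℝ :=
  ∑ k ∈ Finset.range (n + 1), (n.choose k : ℝ) * E a k * x ^ (n - k)

/-!
Binomial convolution is multiplication of exponential generating functions. The EGF of the
kernel is `e^{-xt} (1 - a + a cosh t)`, that of `E_{n,a}(x)` is `e^{xt}` times the EGF of
`E_{n,a}`, and the recurrence defining `E_{n,a}` says exactly that the EGF of `E_{n,a}` is
`1 / (1 - a + a cosh t)`. So the two kernels have mutually inverse EGFs, and the two convolution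
equations are equivalent.
-/

open PowerSeries Nat

section ExponentialGeneratingFunction

variable {K : Type*} [Field K]

noncomputable def binomialConvolution (f g : ℕ → K) (n : ℕ) : K :=
  ∑ k ∈ range (n + 1), (n.choose k : K) * f k * g (n - k)

noncomputable def egf (f : ℕ → K) : K⟦X⟧ :=
  mk fun n => f n / n !

theorem coeff_egf (f : ℕ → K) (n : ℕ) : coeff n (egf f) = f n / n ! :=
  coeff_mk _ _

theorem egf_ite_eq_zero : egf (fun n => if n = 0 then (1 : K) else 0) = 1 := by
  ext n
  rw [coeff_egf, coeff_one]
  split_ifs with hn <;> simp [hn]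

variable [CharZero K]

theorem egf_injective : Function.Injective (egf (K := K)) := fun f g h => funext fun n => by
  simpa [coeff_egf, n.factorial_ne_zero] using congrArg (coeff n) h

theorem egf_binomialConvolution (f g : ℕ → K) :
    egf (binomialConvolution f g) = egf f * egf g := by
  ext n
  rw [coeff_mul,
    Nat.sum_antidiagonal_eq_sum_range_succ fun i j => coeff i (egf f) * coeff j (egf g), coeff_egf, binomialConvolution, sum_div]
  refine sum_congr rfl fun k hk => ?_
  have hfact (m : ℕ) : (m ! : K) ≠ 0 := Nat.cast_ne_zero.mpr m.factorial_ne_zero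
  rw [coeff_egf, coeff_egf, Nat.cast_choose K (mem_range_succ_iff.mp hk)]
  field_simp [hfact n, hfact k, hfact (n - k)]

theorem eq_binomialConvolution_iff (f g h : ℕ → K) :
    (∀ n, h n = binomialConvolution f g n) ↔ egf h = egf f * egf g := by
  rw [← egf_binomialConvolution, egf_injective.eq_iff, funext_iff]

theorem egf_pow (c : K) : egf (c ^ ·) = rescale c (exp K) := by
  ext n
  simp [coeff_egf, coeff_rescale, div_eq_mul_inv]

end ExponentialGeneratingFunction

theorem sum_filter_even_Icc {M : Type*} [AddCommMonoid M] (F : ℕ → M) (n : ℕ) :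
    ∑ k ∈ Icc 1 n with Even k, F k = ∑ j ∈ Icc 1 (n / 2), F (2 * j) := by
  rw [← sum_image (s := Icc 1 (n / 2)) (g := (2 * ·)) fun i _ j _ h => by simpa using h]
  congr 1
  ext k
  simp only [mem_filter, mem_Icc, mem_image, Nat.even_iff]
  constructor
  · rintro ⟨hk, hev⟩
    exact ⟨k / 2, ⟨by omega, by omega⟩, by omega⟩
  · rintro ⟨j, hj, rfl⟩
    omega

theorem E_eq_neg_mul_sum (a : ℝ) {n : ℕ} (hn : n ≠ 0) :
    E a n = -a * ∑ j ∈ Icc 1 (n / 2), (n.choose (2 * j) : ℝ) * E a (n - 2 * j) := by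
  obtain ⟨m, rfl⟩ := Nat.exists_eq_succ_of_ne_zero hn
  rw [E]
  exact congrArg _ (sum_attach _ fun j => ((m + 1).choose (2 * j) : ℝ) * E a (m + 1 - 2 * j))

noncomputable def inversionKernel (a x : ℝ) (k : ℕ) : ℝ :=
  (1 - a) * (-x) ^ k + a / 2 * ((1 - x) ^ k + (-1 - x) ^ k)

theorem inversionKernel_zero_right (a : ℝ) (k : ℕ) :
    inversionKernel a 0 k = if k = 0 then 1 else if Even k then a else 0 := by
  rcases eq_or_ne k 0 with rfl | hk0
  · norm_num [inversionKernel]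
  rcases Nat.even_or_odd k with hk | hk
  · simp [inversionKernel, hk0, hk, hk.neg_one_pow]
    ring
  · simp [inversionKernel, hk.neg_one_pow, hk0, Nat.not_even_iff_odd.mpr hk]

theorem egf_inversionKernel (a x : ℝ) :
    egf (inversionKernel a x) = C (1 - a) * rescale (-x) (exp ℝ) +
      C (a / 2) * (rescale (1 - x) (exp ℝ) + rescale (-1 - x) (exp ℝ)) := by
  ext n
  simp only [coeff_egf, inversionKernel, map_add, coeff_C_mul, coeff_rescale, coeff_exp]
  push_cast
  ring

theorem egf_inversionKernel_zero_right (a : ℝ) :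
    egf (inversionKernel a 0) = C (1 - a) + C (a / 2) * (exp ℝ + rescale (-1) (exp ℝ)) := by
  rw [egf_inversionKernel, neg_zero, sub_zero, sub_zero, rescale_zero_apply, rescale_one]
  simp

theorem egf_inversionKernel_zero_mul_egf_E (a : ℝ) :
    egf (inversionKernel a 0) * egf (E a) = 1 := by
  rw [← egf_ite_eq_zero, eq_comm, ← eq_binomialConvolution_iff]
  intro n
  rcases eq_or_ne n 0 with rfl | hn
  · simp [binomialConvolution, inversionKernel_zero_right, E]
  have hsum : ∑ k ∈ Icc 1 n, (n.choose k : ℝ) * inversionKernel a 0 k * E a (n - k)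
      = a * ∑ j ∈ Icc 1 (n / 2), (n.choose (2 * j) : ℝ) * E a (n - 2 * j) := by
    rw [← sum_filter_even_Icc (fun k => (n.choose k : ℝ) * E a (n - k)), mul_sum, sum_filter]
    refine sum_congr rfl fun k hk => ?_
    rw [inversionKernel_zero_right, if_neg (by simp at hk; omega)]
    split_ifs <;> ring
  rw [if_neg hn, binomialConvolution, range_eq_Ico, sum_eq_sum_Ico_succ_bot (by omega),
    Ico_add_one_right_eq_Icc, hsum, inversionKernel_zero_right, Nat.sub_zero, E_eq_neg_mul_sum a hn]
  simp

theorem egf_EP (a x : ℝ) : egf (fun n => EP a n x) = egf (E a) * rescale x (exp ℝ) := by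
  rw [← egf_pow, ← egf_binomialConvolution]
  rfl

theorem egf_inversionKernel_mul_egf_EP (a x : ℝ) :
    egf (inversionKernel a x) * egf (fun n => EP a n x) = 1 := by
  have h0 : rescale (-x) (exp ℝ) * rescale x (exp ℝ) = 1 := by
    rw [exp_mul_exp_eq_exp_add, neg_add_cancel, rescale_zero_apply]; simp
  have h1 : rescale (1 - x) (exp ℝ) * rescale x (exp ℝ) = exp ℝ := by
    rw [exp_mul_exp_eq_exp_add, sub_add_cancel, rescale_one]; rfl
  have h2 : rescale (-1 - x) (exp ℝ) * rescale x (exp ℝ) = rescale (-1) (exp ℝ) := by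
    rw [exp_mul_exp_eq_exp_add, sub_add_cancel]
  have hE := egf_inversionKernel_zero_mul_egf_E a
  rw [egf_inversionKernel_zero_right] at hE
  rw [egf_inversionKernel, egf_EP]
  linear_combination (C (1 - a) * egf (E a)) * h0 + (C (a / 2) * egf (E a)) * h1 +
    (C (a / 2) * egf (E a)) * h2 + hE

theorem stmt12 (a x : ℝ) (A B : ℕ → ℝ) :
    (∀ n : ℕ, B n = ∑ k ∈ Finset.range (n + 1), (n.choose k : ℝ) *
        ((1 - a) * (-x) ^ k + a / 2 * ((1 - x) ^ k + (-1 - x) ^ k)) * A (n - k)) ↔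
    (∀ n : ℕ, A n = ∑ k ∈ Finset.range (n + 1), (n.choose k : ℝ) * EP a k x * B (n - k)) := by
  have hinv := egf_inversionKernel_mul_egf_EP a x
  refine (eq_binomialConvolution_iff (inversionKernel a x) A B).trans
    (Iff.trans ?_ (eq_binomialConvolution_iff (fun k => EP a k x) B A).symm)
  constructor
  · intro hB
    rw [hB, ← mul_assoc, mul_comm (egf fun k => EP a k x), hinv, one_mul]
  · intro hA
    rw [hA, ← mul_assoc, hinv, one_mul]
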